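/- Let n ≥ 2 and let G_D ≤ O(ℝⁿ) be the group of even signed permutations: maps g of the form (g x)ᵢ = εᵢ x_{σ⁻¹(i)} with σ ∈ Sₙ, ε ∈ {−1,1}ⁿ and ∏_{i=1}^n εᵢ = 1. Let λ, y ∈ ℝⁿ lie in the closed Weyl chamber of type Dₙ: λ₁ ≥ λ₂ ≥ … ≥ λ_{n−1} ≥ |λₙ| and y₁ ≥ y₂ ≥ … ≥ y_{n−1} ≥ |yₙ|. Then for every g ∈ G_D, ⟨λ, g y⟩ = ⟨λ, y⟩ if and only if there exist g₁, g₂ ∈ G_D with g₁ λ = λ, g₂ y = y and g = g₁ ∘ g₂. (This is the Killing-max property for the root system Dₙ.) -/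

import Mathlib

/-!
Call `y` dominant when `|y j| ≤ y i` for all `i < j`; this is the closed `Dₙ` chamber
`y₁ ≥ ⋯ ≥ y_{n-1} ≥ |yₙ|`, i.e. `⟨α, y⟩ ≥ 0` for every positive root `α = eᵢ - s eⱼ`
(`i < j`, `s = ±1`), and the reflections `x ↦ x - ⟨α, x⟩ α` are even signed permutations.

Let `z` maximize `⟨λ, ·⟩` on its orbit. Among the points of `Stab(λ) z` pick `z'` maximizing
`⟨ρ, ·⟩` for the strictly dominant `ρ = (n, n - 1, …, 1)`. If `⟨α, z'⟩ < 0` for a positive root,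
then the reflection in `α` raises `⟨ρ, ·⟩`, and raises `⟨λ, ·⟩` unless `⟨α, λ⟩ = 0`: it either
lies in `Stab(λ)` and contradicts the choice of `z'`, or contradicts the maximality of `z`. So
`z'` is dominant. An orbit contains only one dominant point: the absolute values of two dominant
points are sorted rearrangements of each other, hence equal, and a sign change of the last
coordinate alone is ruled out because the group preserves the product of the coordinates.
Applied to a maximizer, this gives `⟨λ, g y⟩ ≤ ⟨λ, y⟩`; applied to `z = g y` in the case of
equality, it gives `k ∈ Stab(λ)` with `k (g y) = y`, and `g = k⁻¹ ∘ (k ∘ g)`.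
-/

open scoped BigOperators

/-- The group of even signed permutations of `ℝⁿ` (the Weyl group of type `Dₙ`): maps
`x ↦ (ε i * x (σ⁻¹ i)) i` with `σ` a permutation, each `ε i ∈ {−1, 1}` and `∏ i, ε i = 1`. -/
def EvenSignedPerm (n : ℕ) : Set ((Fin n → ℝ) → Fin n → ℝ) :=
  {g | ∃ (σ : Equiv.Perm (Fin n)) (ε : Fin n → ℝ),
    (∀ i, ε i = 1 ∨ ε i = -1) ∧ (∏ i : Fin n, ε i) = 1 ∧
    ∀ (x : Fin n → ℝ) (i : Fin n), g x i = ε i * x (σ⁻¹ i)}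

open Matrix Finset

variable {n : ℕ}

def IsDominantD (y : Fin n → ℝ) : Prop :=
  ∀ ⦃i j : Fin n⦄, i < j → |y j| ≤ y i

namespace IsDominantD

variable {y : Fin n → ℝ}

lemma of_chain (hn : 0 < n) (hchain : ∀ i j : Fin n, i ≤ j → (j : ℕ) < n - 1 → y j ≤ y i)
    (hlast : ∀ i : Fin n, (i : ℕ) < n - 1 → |y ⟨n - 1, by omega⟩| ≤ y i) : IsDominantD y := by
  intro i j hij
  have hi : (i : ℕ) < n - 1 := by have := j.isLt; have : (i : ℕ) < j := hij; omega
  by_cases hj : (j : ℕ) < n - 1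
  · rw [abs_of_nonneg ((abs_nonneg _).trans (hlast j hj))]
    exact hchain i j hij.le hj
  · rw [show j = ⟨n - 1, by omega⟩ from Fin.ext (by have := j.isLt; simp; omega)]
    exact hlast i hi

lemma nonneg (hy : IsDominantD y) {i j : Fin n} (hij : i < j) : 0 ≤ y i :=
  (abs_nonneg _).trans (hy hij)

lemma antitone_abs (hy : IsDominantD y) : Antitone fun i => |y i| := by
  intro i j hij
  rcases hij.lt_or_eq with hij | rfl
  · exact (hy hij).trans (le_abs_self _)
  · rfl

end IsDominantD

def rootD (i j : Fin n) (s : ℝ) : Fin n → ℝ := Pi.single i 1 - s • Pi.single j 1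

def reflect (α x : Fin n → ℝ) : Fin n → ℝ := x - (α ⬝ᵥ x) • α

lemma rootD_dotProduct (i j : Fin n) (s : ℝ) (x : Fin n → ℝ) :
    rootD i j s ⬝ᵥ x = x i - s * x j := by
  simp [rootD, sub_dotProduct]

lemma dotProduct_reflect (v α x : Fin n → ℝ) :
    v ⬝ᵥ reflect α x = v ⬝ᵥ x - (α ⬝ᵥ x) * (α ⬝ᵥ v) := by
  simp [reflect, dotProduct_sub, dotProduct_comm v α]

lemma reflect_eq_self {α x : Fin n → ℝ} (h : α ⬝ᵥ x = 0) : reflect α x = x := by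
  simp [reflect, h]

namespace EvenSignedPerm

variable {g h : (Fin n → ℝ) → Fin n → ℝ}

lemma id_mem : id ∈ EvenSignedPerm n :=
  ⟨1, 1, fun _ => Or.inl rfl, by simp, fun _ _ => by simp⟩

lemma comp_mem (hg : g ∈ EvenSignedPerm n) (hh : h ∈ EvenSignedPerm n) :
    g ∘ h ∈ EvenSignedPerm n := by
  obtain ⟨σ, ε, hε, hεp, hg⟩ := hg
  obtain ⟨τ, δ, hδ, hδp, hh⟩ := hh
  refine ⟨σ * τ, fun i => ε i * δ (σ⁻¹ i), fun i => ?_, ?_, fun x i => ?_⟩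
  · rcases hε i with h1 | h1 <;> rcases hδ (σ⁻¹ i) with h2 | h2 <;> simp only [h1, h2] <;> norm_num
  · rw [prod_mul_distrib, Equiv.prod_comp σ⁻¹ δ, hεp, hδp, one_mul]
  · simp [hg, hh, mul_assoc]

lemma exists_leftInverse (hg : g ∈ EvenSignedPerm n) :
    ∃ g' ∈ EvenSignedPerm n, ∀ x, g' (g x) = x := by
  obtain ⟨σ, ε, hε, hεp, hg⟩ := hg
  refine ⟨fun x i => ε (σ i) * x (σ i), ⟨σ⁻¹, ε ∘ σ, fun i => hε (σ i), ?_, fun x i => by simp⟩,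
    fun x => funext fun i => ?_⟩
  · rw [Function.comp_def, Equiv.prod_comp σ ε, hεp]
  · simp [hg, ← mul_assoc, mul_self_eq_one_iff.2 (hε (σ i))]

lemma finite : (EvenSignedPerm n).Finite := by
  refine (Set.finite_range fun p : Equiv.Perm (Fin n) × (Fin n → Bool) =>
    fun (x : Fin n → ℝ) i => (if p.2 i then -1 else 1) * x (p.1⁻¹ i)).subset ?_
  rintro g ⟨σ, ε, hε, -, hg⟩
  refine ⟨(σ, fun i => decide (ε i = -1)), funext fun x => funext fun i => ?_⟩
  rcases hε i with h | h <;> norm_num [hg, h]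

lemma dotProduct_apply_apply (hg : g ∈ EvenSignedPerm n) (x y : Fin n → ℝ) :
    g x ⬝ᵥ g y = x ⬝ᵥ y := by
  obtain ⟨σ, ε, hε, -, hg⟩ := hg
  simp only [dotProduct, hg]
  rw [← Equiv.sum_comp σ⁻¹ (fun i => x i * y i)]
  refine sum_congr rfl fun i _ => ?_
  linear_combination (x (σ⁻¹ i) * y (σ⁻¹ i)) * mul_self_eq_one_iff.2 (hε i)

lemma prod_apply (hg : g ∈ EvenSignedPerm n) (x : Fin n → ℝ) : ∏ i, g x i = ∏ i, x i := by
  obtain ⟨σ, ε, -, hεp, hg⟩ := hg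
  simp only [hg, prod_mul_distrib, hεp, one_mul]
  exact Equiv.prod_comp σ⁻¹ x

lemma exists_abs_apply (hg : g ∈ EvenSignedPerm n) :
    ∃ σ : Equiv.Perm (Fin n), ∀ x i, |g x i| = |x (σ i)| := by
  obtain ⟨σ, ε, hε, -, hg⟩ := hg
  refine ⟨σ⁻¹, fun x i => ?_⟩
  rcases hε i with h | h <;> simp [hg, h]

lemma reflect_rootD_mem {i j : Fin n} (hij : i ≠ j) {s : ℝ} (hs : s = 1 ∨ s = -1) :
    reflect (rootD i j s) ∈ EvenSignedPerm n := by
  have hss : s * s = 1 := mul_self_eq_one_iff.2 hs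
  refine ⟨Equiv.swap i j, fun k => if k = i ∨ k = j then s else 1, fun k => ?_, ?_, fun x k => ?_⟩
  · dsimp only
    split_ifs
    exacts [hs, Or.inl rfl]
  · rw [prod_ite, prod_const_one, mul_one, prod_const,
      show univ.filter (fun k => k = i ∨ k = j) = {i, j} by ext; simp, card_pair hij, sq, hss]
  · rw [reflect, rootD_dotProduct]
    simp only [rootD, Equiv.swap_inv, Pi.sub_apply, Pi.smul_apply, smul_eq_mul, Pi.single_apply]
    by_cases hki : k = i
    · subst hki
      simp [hij]
    by_cases hkj : k = j
    · subst hkj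
      simp only [Ne.symm hij, ↓reduceIte, mul_one, zero_sub, mul_neg, sub_neg_eq_add, or_true,
        Equiv.swap_apply_right]
      linear_combination (-x k) * hss
    · simp [hki, hkj, Equiv.swap_apply_of_ne_of_ne]

end EvenSignedPerm

open EvenSignedPerm

lemma IsDominantD.apply_eq {g : (Fin n → ℝ) → Fin n → ℝ} {y : Fin n → ℝ}
    (hy : IsDominantD y) (hg : g ∈ EvenSignedPerm n) (hgy : IsDominantD (g y)) : g y = y := by
  obtain ⟨σ, hσ⟩ := exists_abs_apply hg
  have habs : ∀ i, |g y i| = |y i| := by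
    have := Tuple.unique_antitone (f := fun i => |y i|) (σ := σ) (τ := 1)
      (by simpa [Function.comp_def, ← hσ] using hgy.antitone_abs) (by simpa using hy.antitone_abs)
    exact fun i => (hσ y i).trans (congrFun this i)
  have hlt : ∀ ⦃j k : Fin n⦄, j < k → g y j = y j := fun j k hjk => by
    rw [← abs_of_nonneg (hgy.nonneg hjk), ← abs_of_nonneg (hy.nonneg hjk), habs]
  funext k
  by_cases hk : ∃ j, k < j
  · obtain ⟨j, hkj⟩ := hk
    exact hlt hkj
  push Not at hk
  have hprod := prod_apply hg y
  rw [← mul_prod_erase univ _ (mem_univ k), ← mul_prod_erase univ (fun i => y i) (mem_univ k),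
    prod_congr rfl fun j hj => hlt ((hk j).lt_of_ne (ne_of_mem_erase hj))] at hprod
  by_cases hP : ∏ j ∈ univ.erase k, y j = 0
  · obtain ⟨j, hj, hyj⟩ := prod_eq_zero_iff.1 hP
    have hyk : y k = 0 := abs_nonpos_iff.1 (hyj ▸ hy ((hk j).lt_of_ne (ne_of_mem_erase hj)))
    rw [hyk, ← abs_eq_zero, habs, hyk, abs_zero]
  · exact mul_right_cancel₀ hP hprod

lemma exists_fix_isDominantD {lam z : Fin n → ℝ} (hlam : IsDominantD lam)
    (hmax : ∀ g ∈ EvenSignedPerm n, lam ⬝ᵥ g z ≤ lam ⬝ᵥ z) :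
    ∃ k ∈ EvenSignedPerm n, k lam = lam ∧ IsDominantD (k z) := by
  set ρ : Fin n → ℝ := fun i => n - i
  obtain ⟨k, ⟨hk, hklam⟩, hkmax⟩ := Set.exists_max_image {k ∈ EvenSignedPerm n | k lam = lam}
    (fun k => ρ ⬝ᵥ k z) (EvenSignedPerm.finite.subset fun _ h => h.1) ⟨id, id_mem, rfl⟩
  refine ⟨k, hk, hklam, fun i j hij => abs_le.2 ?_⟩
  suffices h : ∀ s : ℝ, (s = 1 ∨ s = -1) → 0 ≤ rootD i j s ⬝ᵥ k z by
    have h1 := h 1 (Or.inl rfl)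
    have h2 := h (-1) (Or.inr rfl)
    simp only [rootD_dotProduct] at h1 h2
    constructor <;> linarith
  intro s hs
  by_contra! hneg
  have hr := reflect_rootD_mem hij.ne hs
  have hlam_root : 0 ≤ rootD i j s ⬝ᵥ lam := by
    have := abs_le.1 (hlam hij)
    rw [rootD_dotProduct]
    rcases hs with rfl | rfl <;> linarith
  rcases hlam_root.eq_or_lt with h0 | hpos
  · have hρ : 0 < rootD i j s ⬝ᵥ ρ := by
      have hij' : (i : ℝ) < j := by exact_mod_cast hij
      have hjn : (j : ℝ) < n := by exact_mod_cast j.isLt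
      rw [rootD_dotProduct]
      rcases hs with rfl | rfl <;> simp only [ρ] <;> linarith
    have := hkmax (reflect (rootD i j s) ∘ k)
      ⟨comp_mem hr hk, by simp [hklam, reflect_eq_self h0.symm]⟩
    simp only [Function.comp, dotProduct_reflect] at this
    nlinarith
  · have hkz : lam ⬝ᵥ k z = lam ⬝ᵥ z := by
      conv_lhs => rw [← hklam]
      exact dotProduct_apply_apply hk lam z
    have := hmax _ (comp_mem hr hk)
    simp only [Function.comp, dotProduct_reflect] at this
    nlinarith

theorem dotProduct_apply_le {lam y : Fin n → ℝ} {g : (Fin n → ℝ) → Fin n → ℝ}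
    (hlam : IsDominantD lam) (hy : IsDominantD y) (hg : g ∈ EvenSignedPerm n) :
    lam ⬝ᵥ g y ≤ lam ⬝ᵥ y := by
  obtain ⟨g₀, hg₀, hmax⟩ := Set.exists_max_image _ (fun g => lam ⬝ᵥ g y) EvenSignedPerm.finite
    ⟨id, id_mem⟩
  obtain ⟨k, hk, hklam, hdom⟩ := exists_fix_isDominantD hlam (z := g₀ y)
    fun g' hg' => hmax (g' ∘ g₀) (comp_mem hg' hg₀)
  have hky : k (g₀ y) = y := hy.apply_eq (g := k ∘ g₀) (comp_mem hk hg₀) hdom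
  calc lam ⬝ᵥ g y ≤ lam ⬝ᵥ g₀ y := hmax g hg
    _ = k lam ⬝ᵥ k (g₀ y) := (dotProduct_apply_apply hk _ _).symm
    _ = lam ⬝ᵥ y := by rw [hklam, hky]

theorem exists_fix_apply_eq {lam y : Fin n → ℝ} {g : (Fin n → ℝ) → Fin n → ℝ}
    (hlam : IsDominantD lam) (hy : IsDominantD y) (hg : g ∈ EvenSignedPerm n)
    (heq : lam ⬝ᵥ g y = lam ⬝ᵥ y) : ∃ k ∈ EvenSignedPerm n, k lam = lam ∧ k (g y) = y := by
  obtain ⟨k, hk, hklam, hdom⟩ := exists_fix_isDominantD hlam (z := g y)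
    fun g' hg' => heq ▸ dotProduct_apply_le hlam hy (comp_mem hg' hg)
  exact ⟨k, hk, hklam, hy.apply_eq (g := k ∘ g) (comp_mem hk hg) hdom⟩

/-- Killing-max property for the root system `Dₙ`. For `λ, y` in the closed
Weyl chamber of type `Dₙ` (`λ₁ ≥ … ≥ λ_{n-1} ≥ |λₙ|` and likewise for `y`) and any even
signed permutation `g`, `⟨λ, g y⟩ = ⟨λ, y⟩` iff `g = g₁ ∘ g₂` with `g₁, g₂` even signed
permutations fixing `λ` and `y` respectively. -/
theorem stmt_15 (n : ℕ) (hn : 2 ≤ n) (lam y : Fin n → ℝ)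
    (hlamchain : ∀ i j : Fin n, i ≤ j → (j : ℕ) < n - 1 → lam j ≤ lam i)
    (hlamlast : ∀ i : Fin n, (i : ℕ) < n - 1 → |lam ⟨n - 1, by omega⟩| ≤ lam i)
    (hychain : ∀ i j : Fin n, i ≤ j → (j : ℕ) < n - 1 → y j ≤ y i)
    (hylast : ∀ i : Fin n, (i : ℕ) < n - 1 → |y ⟨n - 1, by omega⟩| ≤ y i)
    (g : (Fin n → ℝ) → Fin n → ℝ) (hg : g ∈ EvenSignedPerm n) :
    (∑ i : Fin n, lam i * g y i) = (∑ i : Fin n, lam i * y i) ↔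
      ∃ g₁ ∈ EvenSignedPerm n, ∃ g₂ ∈ EvenSignedPerm n,
        g₁ lam = lam ∧ g₂ y = y ∧ g = g₁ ∘ g₂ := by
  change lam ⬝ᵥ g y = lam ⬝ᵥ y ↔ _
  constructor
  · intro heq
    obtain ⟨k, hk, hklam, hky⟩ := exists_fix_apply_eq (.of_chain (by omega) hlamchain hlamlast)
      (.of_chain (by omega) hychain hylast) hg heq
    obtain ⟨k', hk', hk'k⟩ := exists_leftInverse hk
    refine ⟨k', hk', k ∘ g, comp_mem hk hg, ?_, hky, funext fun x => (hk'k (g x)).symm⟩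
    conv_lhs => rw [← hklam]
    exact hk'k lam
  · rintro ⟨g₁, hg₁, g₂, -, hg₁lam, hg₂y, rfl⟩
    calc lam ⬝ᵥ g₁ (g₂ y) = g₁ lam ⬝ᵥ g₁ y := by rw [hg₁lam, hg₂y]
      _ = lam ⬝ᵥ y := dotProduct_apply_apply hg₁ lam y
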